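/- Let S ⊂ ℤ × ℤ be a finite set and let f, g : (S → ℝ) → ℝ be differentiable functions. For a grid function u : ℤ × ℤ → ℝ define f[u](m,n) = f( (i,j) ↦ u(m+i, n+j) ) (restriction of u to the stencil S translated to (m,n)), and similarly g[u]. Let H[u] = D_m(f[u]) + D_n(g[u]) be the associated difference divergence, where D_m F(m,n) = (F(m+1,n) − F(m,n))/Δx and D_n F(m,n) = (F(m,n+1) − F(m,n))/Δt with Δx, Δt > 0. Write H[u](m,n) as a differentiable function of the finitely many values u_{i,j} = u(m+i, n+j), (i,j) in the finite stencil S' = S ∪ (S + (1,0)) ∪ (S + (0,1)). Then the discrete Euler operator annihilates H: for every grid function u and every (m,n) ∈ ℤ², Σ_{(i,j) ∈ S'} (∂H/∂u_{i,j})[u](m − i, n − j) = 0, where (∂H/∂u_{i,j})[u](m,n) denotes the partial derivative of H with respect to its (i,j)-th argument evaluated at the values of u around (m,n). -/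
import Mathlib

noncomputable section

/-- Forward difference in space: `D_m F = (S_m F − F)/Δx`. -/
def Dm (dx : ℝ) (F : ℤ × ℤ → ℝ) : ℤ × ℤ → ℝ := fun p => (F (p.1 + 1, p.2) - F p) / dx

/-- Forward difference in time: `D_n F = (S_n F − F)/Δt`. -/
def Dn (dt : ℝ) (F : ℤ × ℤ → ℝ) : ℤ × ℤ → ℝ := fun p => (F (p.1, p.2 + 1) - F p) / dt

/-- Evaluation of a stencil function on a grid function: `f[u](m,n) = f((i,j) ↦ u(m+i,n+j))`. -/
def stencilEval (S : Finset (ℤ × ℤ)) (f : ({q : ℤ × ℤ // q ∈ S} → ℝ) → ℝ)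
    (u : ℤ × ℤ → ℝ) : ℤ × ℤ → ℝ :=
  fun p => f (fun q => u (p.1 + q.1.1, p.2 + q.1.2))

/-- Perturbation of a grid function at a single point. -/
def pert (u : ℤ × ℤ → ℝ) (q : ℤ × ℤ) (ε : ℝ) : ℤ × ℤ → ℝ :=
  fun p => if p = q then u p + ε else u p

lemma pert_eq (u : ℤ × ℤ → ℝ) (c : ℤ × ℤ) (ε : ℝ) (x : ℤ × ℤ) :
    pert u c ε x = u x + (if x = c then ε else 0) := by
  simp only [pert]; split <;> simp

lemma diff_aux (S : Finset (ℤ × ℤ)) (f : ({q : ℤ × ℤ // q ∈ S} → ℝ) → ℝ)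
    (hf : Differentiable ℝ f) (u : ℤ × ℤ → ℝ) (c : ℤ × ℤ) (p : ℤ × ℤ) :
    Differentiable ℝ (fun ε => stencilEval S f (pert u c ε) p) := by
  have heq : (fun ε => stencilEval S f (pert u c ε) p)
      = f ∘ (fun ε (q : {q : ℤ × ℤ // q ∈ S}) =>
          u (p.1 + q.1.1, p.2 + q.1.2) + if (p.1 + q.1.1, p.2 + q.1.2) = c then ε else 0) := by
    funext ε
    simp only [stencilEval, Function.comp_apply]
    congr 1
    funext q
    exact pert_eq u c ε _
  rw [heq]
  apply hf.comp
  apply differentiable_pi.mpr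
  intro q
  by_cases h : (p.1 + q.1.1, p.2 + q.1.2) = c <;> simp [h] <;> fun_prop

lemma vanish_aux (S : Finset (ℤ × ℤ)) (f : ({q : ℤ × ℤ // q ∈ S} → ℝ) → ℝ)
    (u : ℤ × ℤ → ℝ) (c : ℤ × ℤ) (p : ℤ × ℤ)
    (h : ∀ q : {q : ℤ × ℤ // q ∈ S}, (p.1 + q.1.1, p.2 + q.1.2) ≠ c) :
    deriv (fun ε => stencilEval S f (pert u c ε) p) 0 = 0 := by
  have heq : (fun ε => stencilEval S f (pert u c ε) p) = fun _ => stencilEval S f u p := by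
    funext ε
    simp only [stencilEval]
    congr 1
    funext q
    rw [pert_eq, if_neg (h q), add_zero]
  rw [heq, deriv_const]

/-- Kuperschmidt's theorem (divergence direction): the discrete Euler operator
`𝖤 = Σ_{(i,j)} S_m^{-i} S_n^{-j} ∂/∂u_{i,j}` annihilates every difference divergence
`H[u] = D_m(f[u]) + D_n(g[u])`.  Here `∂H/∂u_{i,j}` at a point is realized as the
derivative of `H` with respect to a perturbation of the single grid value involved. -/
theorem discrete_euler_annihilates_divergence (dx dt : ℝ) (hdx : 0 < dx) (hdt : 0 < dt)
    (S : Finset (ℤ × ℤ))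
    (f g : ({q : ℤ × ℤ // q ∈ S} → ℝ) → ℝ)
    (hf : Differentiable ℝ f) (hg : Differentiable ℝ g) :
    ∀ (u : ℤ × ℤ → ℝ) (m n : ℤ),
      ∑ ij ∈ (S ∪ S.image (fun q => (q.1 + 1, q.2)) ∪ S.image (fun q => (q.1, q.2 + 1))),
        deriv
          (fun ε =>
            (Dm dx (stencilEval S f (pert u (m, n) ε))
              + Dn dt (stencilEval S g (pert u (m, n) ε))) (m - ij.1, n - ij.2))
          0 = 0 := by
  intro u m n
  set c : ℤ × ℤ := (m, n) with hc
  set A : ℤ × ℤ → ℝ := fun p => deriv (fun ε => stencilEval S f (pert u c ε) p) 0 with hA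
  set B : ℤ × ℤ → ℝ := fun p => deriv (fun ε => stencilEval S g (pert u c ε) p) 0 with hB
  set T : Finset (ℤ × ℤ) :=
    S ∪ S.image (fun q => (q.1 + 1, q.2)) ∪ S.image (fun q => (q.1, q.2 + 1)) with hT
  -- Pointwise computation of the derivative of H
  have key : ∀ ij : ℤ × ℤ,
      deriv (fun ε =>
            (Dm dx (stencilEval S f (pert u (m, n) ε))
              + Dn dt (stencilEval S g (pert u (m, n) ε))) (m - ij.1, n - ij.2)) 0
      = (A (m - ij.1 + 1, n - ij.2) - A (m - ij.1, n - ij.2)) / dx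
        + (B (m - ij.1, n - ij.2 + 1) - B (m - ij.1, n - ij.2)) / dt := by
    intro ij
    have h1 := ((diff_aux S f hf u c (m - ij.1 + 1, n - ij.2)) 0).hasDerivAt
    have h2 := ((diff_aux S f hf u c (m - ij.1, n - ij.2)) 0).hasDerivAt
    have h3 := ((diff_aux S g hg u c (m - ij.1, n - ij.2 + 1)) 0).hasDerivAt
    have h4 := ((diff_aux S g hg u c (m - ij.1, n - ij.2)) 0).hasDerivAt
    have hcomb := ((h1.sub h2).div_const dx).add ((h3.sub h4).div_const dt)
    have := hcomb.deriv
    rw [← this]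
    rfl
  rw [Finset.sum_congr rfl (fun ij _ => key ij)]
  rw [Finset.sum_add_distrib]
  have hsplit : ∀ (C : ℤ × ℤ → ℝ) (d : ℝ),
      ∑ ij ∈ T, (C ij) / d = (∑ ij ∈ T, C ij) / d := by
    intro C d; rw [Finset.sum_div]
  -- vanishing lemma in usable form
  have hAvan : ∀ ij : ℤ × ℤ, ij ∉ S → A (m - ij.1, n - ij.2) = 0 := by
    intro ij hij
    apply vanish_aux
    intro q hq
    apply hij
    have h1 : m - ij.1 + q.1.1 = m := congrArg Prod.fst hq
    have h2 : n - ij.2 + q.1.2 = n := congrArg Prod.snd hq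
    have : q.1 = ij := by
      have : q.1.1 = ij.1 := by omega
      have h2' : q.1.2 = ij.2 := by omega
      exact Prod.ext this h2'
    rw [← this]; exact q.2
  have hBvan : ∀ ij : ℤ × ℤ, ij ∉ S → B (m - ij.1, n - ij.2) = 0 := by
    intro ij hij
    apply vanish_aux
    intro q hq
    apply hij
    have h1 : m - ij.1 + q.1.1 = m := congrArg Prod.fst hq
    have h2 : n - ij.2 + q.1.2 = n := congrArg Prod.snd hq
    have : q.1 = ij := by
      have : q.1.1 = ij.1 := by omega
      have h2' : q.1.2 = ij.2 := by omega
      exact Prod.ext this h2'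
    rw [← this]; exact q.2
  -- The four sums
  have hS_sub : S ⊆ T := by
    intro x hx; simp only [hT, Finset.mem_union]; left; left; exact hx
  have hSx_sub : S.image (fun q : ℤ × ℤ => (q.1 + 1, q.2)) ⊆ T := by
    intro x hx; simp only [hT, Finset.mem_union]; left; right; exact hx
  have hSy_sub : S.image (fun q : ℤ × ℤ => (q.1, q.2 + 1)) ⊆ T := by
    intro x hx; simp only [hT, Finset.mem_union]; right; exact hx
  have sumA2 : ∑ ij ∈ T, A (m - ij.1, n - ij.2) = ∑ q ∈ S, A (m - q.1, n - q.2) :=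
    (Finset.sum_subset hS_sub (fun x _ hx => hAvan x hx)).symm
  have sumB2 : ∑ ij ∈ T, B (m - ij.1, n - ij.2) = ∑ q ∈ S, B (m - q.1, n - q.2) :=
    (Finset.sum_subset hS_sub (fun x _ hx => hBvan x hx)).symm
  have sumA1 : ∑ ij ∈ T, A (m - ij.1 + 1, n - ij.2) = ∑ q ∈ S, A (m - q.1, n - q.2) := by
    rw [← Finset.sum_subset hSx_sub]
    · rw [Finset.sum_image]
      · apply Finset.sum_congr rfl
        intro q _
        congr 1
        exact Prod.ext (by omega) rfl
      · intro a _ b _ hab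
        simp only [Prod.mk.injEq] at hab
        exact Prod.ext (by omega) hab.2
    · intro x _ hx
      have : (x.1 - 1, x.2) ∉ S := by
        intro hmem
        apply hx
        simp only [Finset.mem_image]
        exact ⟨(x.1 - 1, x.2), hmem, Prod.ext (by omega) rfl⟩
      have h0 := hAvan (x.1 - 1, x.2) this
      rw [show (m - x.1 + 1 : ℤ) = m - (x.1 - 1, x.2).1 from by omega]
      exact h0
  have sumB1 : ∑ ij ∈ T, B (m - ij.1, n - ij.2 + 1) = ∑ q ∈ S, B (m - q.1, n - q.2) := by
    rw [← Finset.sum_subset hSy_sub]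
    · rw [Finset.sum_image]
      · apply Finset.sum_congr rfl
        intro q _
        congr 1
        exact Prod.ext rfl (by omega)
      · intro a _ b _ hab
        simp only [Prod.mk.injEq] at hab
        exact Prod.ext hab.1 (by omega)
    · intro x _ hx
      have : (x.1, x.2 - 1) ∉ S := by
        intro hmem
        apply hx
        simp only [Finset.mem_image]
        exact ⟨(x.1, x.2 - 1), hmem, Prod.ext rfl (by omega)⟩
      have h0 := hBvan (x.1, x.2 - 1) this
      rw [show (n - x.2 + 1 : ℤ) = n - (x.1, x.2 - 1).2 from by omega]
      exact h0
  have e1 : ∑ ij ∈ T, (A (m - ij.1 + 1, n - ij.2) - A (m - ij.1, n - ij.2)) / dx = 0 := by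
    rw [hsplit, Finset.sum_sub_distrib, sumA1, sumA2, sub_self, zero_div]
  have e2 : ∑ ij ∈ T, (B (m - ij.1, n - ij.2 + 1) - B (m - ij.1, n - ij.2)) / dt = 0 := by
    rw [hsplit, Finset.sum_sub_distrib, sumB1, sumB2, sub_self, zero_div]
  rw [e1, e2, add_zero]
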